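/- arXiv:1409.0410 — 3 statements merged into one kernel-verified Lean document; each statement's English description precedes it below -/
import Mathlib

section
/- Let p be a prime and A a commutative p-Boolean 𝔽_p-algebra (a^p = a for all a ∈ A). Then: (i) for every prime ideal 𝔭 of A, the canonical ring homomorphism 𝔽_p → A/𝔭 is bijective; and (ii) the resulting canonical 𝔽_p-algebra homomorphism from A to the algebra C(Spec A, 𝔽_p) of continuous 𝔽_p-valued functions on the prime spectrum of A — sending a ∈ A to the function 𝔭 ↦ (the element of 𝔽_p corresponding under (i) to the residue class of a in A/𝔭) — is an isomorphism of 𝔽_p-algebras. Here Spec A = PrimeSpectrum A carries the Zariski topology and 𝔽_p the discrete topology. (The duality for p-Boolean algebras quoted in Appendix C.4 of the paper: a p-Boolean algebra A is isomorphic to the algebra of continuous 𝔽_p-valued maps on Spec(A).) -/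
/-!
The argument works over any finite field `K` with `q` elements. Every element of a quotient
`A ⧸ 𝔭` is a root of `X ^ q - X = ∏ c : K, (X - c)`, so in the domain `A ⧸ 𝔭` it equals some
`c : K`; this gives residue maps `A → K`. For fixed `a` the fibre of `𝔭 ↦ a mod 𝔭` over `c`
is the closed set `V(a - c)`, and finitely many closed fibres cover `Spec A`, so the map is
continuous. It is injective because `a ^ q = a` makes `A` reduced, and surjective because the
fibres of a continuous `f : Spec A → K` are clopen, hence of the form `D(e c)` for idempotents
`e c`, and then `f` is the image of `∑ c, c • e c`.
-/

open Polynomial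

theorem FiniteField.prod_X_sub_C_eq_X_pow_card_sub_X (K : Type*) [Field K] [Fintype K] :
    ∏ c : K, (X - C c) = X ^ Fintype.card K - X := by
  have hq := Fintype.one_lt_card (α := K)
  have hmonic : (X ^ Fintype.card K - X : K[X]).Monic :=
    monic_X_pow_sub (by rw [degree_X]; exact_mod_cast hq)
  have hcard : (X ^ Fintype.card K - X : K[X]).roots.card =
      (X ^ Fintype.card K - X : K[X]).natDegree := by
    rw [roots_X_pow_card_sub_X, X_pow_card_sub_X_natDegree_eq K hq]
    rfl
  rw [← prod_multiset_X_sub_C_of_monic_of_roots_card_eq hmonic hcard, roots_X_pow_card_sub_X]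
  rfl

theorem FiniteField.algebraMap_bijective_of_pow_card_eq_self {K R : Type*} [Field K] [Fintype K]
    [CommRing R] [IsDomain R] [Algebra K R] (hR : ∀ x : R, x ^ Fintype.card K = x) :
    Function.Bijective (algebraMap K R) := by
  refine ⟨(algebraMap K R).injective, fun x => ?_⟩
  have hprod : ∏ c : K, (x - algebraMap K R c) = 0 := by
    simpa [hR, sub_self] using congrArg (aeval x) (prod_X_sub_C_eq_X_pow_card_sub_X K)
  obtain ⟨c, -, hc⟩ := Finset.prod_eq_zero_iff.mp hprod
  exact ⟨c, (sub_eq_zero.mp hc).symm⟩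

theorem isReduced_of_pow_eq_self {R : Type*} [CommRing R] {n : ℕ} (hn : 1 < n)
    (h : ∀ a : R, a ^ n = a) : IsReduced R := by
  refine ⟨fun a ⟨k, hk⟩ => ?_⟩
  have hpow : ∀ m : ℕ, a ^ n ^ m = a := fun m => by
    induction m with
    | zero => simp
    | succ m ih => rw [pow_succ, pow_mul, ih, h]
  rw [← hpow k]
  exact pow_eq_zero_of_le (Nat.lt_pow_self hn).le hk

theorem continuous_of_isClosed_preimage_singleton {X Y : Type*} [TopologicalSpace X]
    [TopologicalSpace Y] [Finite Y] {f : X → Y} (h : ∀ y, IsClosed (f ⁻¹' {y})) : Continuous f :=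
  continuous_iff_isClosed.mpr fun s _ => by
    rw [← Set.biUnion_of_singleton s, Set.preimage_iUnion₂]
    exact (Set.toFinite s).isClosed_biUnion fun y _ => h y

namespace PBoolean

variable {K A : Type*} [Field K] [Fintype K] [CommRing A] [Algebra K A]

theorem algebraMap_quotient_bijective (hA : ∀ a : A, a ^ Fintype.card K = a)
    (𝔭 : PrimeSpectrum A) : Function.Bijective (algebraMap K (A ⧸ 𝔭.asIdeal)) :=
  FiniteField.algebraMap_bijective_of_pow_card_eq_self fun x => by
    obtain ⟨a, rfl⟩ := Ideal.Quotient.mk_surjective x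
    rw [← map_pow, hA]

variable (hA : ∀ a : A, a ^ Fintype.card K = a)

noncomputable def residue (𝔭 : PrimeSpectrum A) : A →ₐ[K] K :=
  (AlgEquiv.ofBijective (Algebra.ofId K _) (algebraMap_quotient_bijective hA 𝔭)).symm.toAlgHom.comp
    (Ideal.Quotient.mkₐ K 𝔭.asIdeal)

theorem algebraMap_residue (𝔭 : PrimeSpectrum A) (a : A) :
    algebraMap K (A ⧸ 𝔭.asIdeal) (residue hA 𝔭 a) = Ideal.Quotient.mk 𝔭.asIdeal a :=
  (AlgEquiv.ofBijective (Algebra.ofId K _) (algebraMap_quotient_bijective hA 𝔭)).apply_symm_apply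
    (Ideal.Quotient.mk 𝔭.asIdeal a)

theorem residue_eq_zero_iff {𝔭 : PrimeSpectrum A} {a : A} :
    residue hA 𝔭 a = 0 ↔ a ∈ 𝔭.asIdeal := by
  rw [← Ideal.Quotient.eq_zero_iff_mem, ← algebraMap_residue hA, map_eq_zero_iff _
    (algebraMap_quotient_bijective hA 𝔭).injective]

theorem preimage_residue_apply_singleton (a : A) (c : K) :
    (residue hA · a) ⁻¹' {c} = PrimeSpectrum.zeroLocus {a - algebraMap K A c} := by
  ext 𝔭
  simp [PrimeSpectrum.mem_zeroLocus, ← residue_eq_zero_iff hA, sub_eq_zero]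

theorem continuous_residue_apply [TopologicalSpace K] (a : A) : Continuous (residue hA · a) :=
  continuous_of_isClosed_preimage_singleton fun c =>
    preimage_residue_apply_singleton hA a c ▸ PrimeSpectrum.isClosed_zeroLocus _


open Classical in
theorem residue_of_isIdempotentElem {e : A} (he : IsIdempotentElem e) (𝔭 : PrimeSpectrum A) :
    residue hA 𝔭 e = if 𝔭 ∈ PrimeSpectrum.basicOpen e then 1 else 0 := by
  rw [PrimeSpectrum.mem_basicOpen, ← residue_eq_zero_iff hA]
  rcases IsIdempotentElem.iff_eq_zero_or_one.mp (he.map (residue hA 𝔭)) with h | h <;> simp [h]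

variable [TopologicalSpace K] [DiscreteTopology K]

noncomputable def toContinuousMap : A →ₐ[K] C(PrimeSpectrum A, K) where
  toFun a := ⟨(residue hA · a), continuous_residue_apply hA a⟩
  map_one' := by ext; simp
  map_mul' _ _ := by ext; simp
  map_zero' := by ext; simp
  map_add' _ _ := by ext; simp
  commutes' _ := by ext; simp

@[simp]
theorem toContinuousMap_apply (a : A) (𝔭 : PrimeSpectrum A) :
    toContinuousMap hA a 𝔭 = residue hA 𝔭 a :=
  rfl

theorem toContinuousMap_injective : Function.Injective (toContinuousMap hA) := by
  have : IsReduced A := isReduced_of_pow_eq_self Fintype.one_lt_card hA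
  refine (injective_iff_map_eq_zero _).mpr fun a ha => IsReduced.eq_zero a ?_
  refine nilpotent_iff_mem_prime.mpr fun I hI => ?_
  rw [← residue_eq_zero_iff hA (𝔭 := ⟨I, hI⟩), ← toContinuousMap_apply, ha,
    ContinuousMap.zero_apply]

theorem toContinuousMap_surjective : Function.Surjective (toContinuousMap hA) := by
  intro f
  choose e he hfiber using fun c : K =>
    PrimeSpectrum.exists_idempotent_basicOpen_eq_of_isClopen
      ((isClopen_discrete {c}).preimage f.continuous)
  refine ⟨∑ c, c • e c, ContinuousMap.ext fun 𝔭 => ?_⟩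
  classical
  have hres : ∀ c, residue hA 𝔭 (e c) = if f 𝔭 = c then 1 else 0 := fun c => by
    rw [residue_of_isIdempotentElem hA (he c), ← SetLike.mem_coe, ← hfiber]
    congr
  simp [hres]

noncomputable def equivContinuousMap : A ≃ₐ[K] C(PrimeSpectrum A, K) :=
  AlgEquiv.ofBijective (toContinuousMap hA)
    ⟨toContinuousMap_injective hA, toContinuousMap_surjective hA⟩

end PBoolean

/-- **duality for p-Boolean algebras.** Let `p` be a prime and `A` a
commutative p-Boolean `𝔽_p`-algebra (`a^p = a` for all `a`). Then: (i) for every prime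
ideal `𝔭` of `A`, the canonical ring homomorphism `𝔽_p → A/𝔭` is bijective; and (ii) the
canonical `𝔽_p`-algebra homomorphism from `A` to the algebra `C(Spec A, 𝔽_p)` of
continuous `𝔽_p`-valued functions on the prime spectrum of `A` — sending `a ∈ A` to the
function `𝔭 ↦` (the element of `𝔽_p` corresponding under (i) to the residue class of `a`
in `A/𝔭`) — is an isomorphism of `𝔽_p`-algebras. Here `Spec A` carries the Zariski
topology and `𝔽_p` the discrete topology. -/
theorem pBoolean_equiv_continuous_functions (p : ℕ) [Fact p.Prime]
    [TopologicalSpace (ZMod p)] [DiscreteTopology (ZMod p)]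
    (A : Type*) [CommRing A] [Algebra (ZMod p) A] (hA : ∀ a : A, a ^ p = a) :
    (∀ 𝔭 : PrimeSpectrum A,
        Function.Bijective (algebraMap (ZMod p) (A ⧸ 𝔭.asIdeal))) ∧
      ∃ Φ : A ≃ₐ[ZMod p] C(PrimeSpectrum A, ZMod p),
        ∀ (a : A) (𝔭 : PrimeSpectrum A),
          algebraMap (ZMod p) (A ⧸ 𝔭.asIdeal) (Φ a 𝔭) =
            Ideal.Quotient.mk 𝔭.asIdeal a := by
  have hA' : ∀ a : A, a ^ Fintype.card (ZMod p) = a := by simpa only [ZMod.card] using hA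
  exact ⟨PBoolean.algebraMap_quotient_bijective hA', PBoolean.equivContinuousMap hA',
    fun a 𝔭 => PBoolean.algebraMap_residue hA' 𝔭 a⟩
end

section
/- Let p be a prime and let B be the free p-Boolean algebra on countably many generators, i.e. the quotient of the multivariate polynomial algebra 𝔽_p[x_i : i ∈ ℕ] = MvPolynomial ℕ (ZMod p) by the ideal generated by all elements x_i^p − x_i (i ∈ ℕ). Then B is not set-like: there is no set S such that B is isomorphic as an 𝔽_p-algebra to the algebra of all functions S → 𝔽_p with pointwise operations. (Asserted in Appendix C.4 of the paper.) -/
/-!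
The quotient `B` is countable, being a quotient of a polynomial ring over a finite field in
countably many variables, and infinite, since the classes of the generators `x_i` are pairwise
distinct: evaluation at a point of `𝔽_p^ℕ` kills every `x_i^p - x_i` by Fermat's little theorem,
and evaluation at the indicator of `i` separates `x_i` from the other generators.
On the other hand `S → 𝔽_p` is finite when `S` is finite and uncountable when `S` is infinite,
by Cantor's theorem.
-/

open MvPolynomial

instance MvPolynomial.instCountable {σ R : Type*} [CommSemiring R] [Countable σ] [Countable R] :
    Countable (MvPolynomial σ R) :=
  (AddMonoidAlgebra.coeffEquiv (R := R) (M := σ →₀ ℕ)).symm.countable_iff.mp inferInstance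

instance instUncountableSetOfInfinite (S : Type*) [Infinite S] : Uncountable (Set S) where
  not_countable h :=
    let ⟨_, hf⟩ := h.exists_injective_nat
    Function.cantor_injective _ ((Infinite.natEmbedding S).injective.comp hf)

theorem Pi.uncountable_of_infinite (S α : Type*) [Infinite S] [Nontrivial α] :
    Uncountable (S → α) := by
  classical
  obtain ⟨a, b, hab⟩ := exists_pair_ne α
  have hinj : Function.Injective fun P : Prop => if P then a else b := by
    intro P Q h
    by_cases hP : P <;> by_cases hQ : Q <;> simp_all
  exact (Function.Injective.comp_left hinj).uncountable (α := Set S)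

theorem Pi.finite_of_countable (S α : Type*) [Finite α] [Countable (S → α)] : Finite (S → α) := by
  rcases finite_or_infinite S with hS | hS
  · infer_instance
  rcases subsingleton_or_nontrivial α with hα | hα
  · infer_instance
  · exact absurd ‹Countable (S → α)› (Pi.uncountable_of_infinite S α).not_countable

section FreePBoolean

variable (σ : Type*) (p : ℕ)

noncomputable def freePBooleanIdeal : Ideal (MvPolynomial σ (ZMod p)) :=
  Ideal.span {f | ∃ i, f = X i ^ p - X i}

abbrev FreePBoolean : Type _ := MvPolynomial σ (ZMod p) ⧸ freePBooleanIdeal σ p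

variable {σ p} [Fact p.Prime]

instance [Countable σ] : Countable (FreePBoolean σ p) :=
  Ideal.Quotient.mk_surjective.countable

theorem freePBooleanIdeal_le_ker_aeval (x : σ → ZMod p) :
    freePBooleanIdeal σ p ≤ RingHom.ker (aeval x) :=
  Ideal.span_le.mpr <| by rintro _ ⟨i, rfl⟩; simp [ZMod.pow_card]

noncomputable def FreePBoolean.eval (x : σ → ZMod p) : FreePBoolean σ p →ₐ[ZMod p] ZMod p :=
  Ideal.Quotient.liftₐ _ (aeval x) (freePBooleanIdeal_le_ker_aeval x)

@[simp]
theorem FreePBoolean.eval_mk (x : σ → ZMod p) (f : MvPolynomial σ (ZMod p)) :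
    FreePBoolean.eval x (Ideal.Quotient.mk _ f) = aeval x f :=
  rfl

theorem FreePBoolean.mk_X_injective :
    Function.Injective fun i : σ => Ideal.Quotient.mk (freePBooleanIdeal σ p) (X i) := by
  classical
  intro i j hij
  have h := congrArg (FreePBoolean.eval (Pi.single i 1)) hij
  by_contra hne
  simp [Ne.symm hne] at h

instance [Infinite σ] : Infinite (FreePBoolean σ p) :=
  Infinite.of_injective _ FreePBoolean.mk_X_injective

end FreePBoolean

/-- Let `p` be a prime and let `B` be the free p-Boolean algebra on
countably many generators, i.e. the quotient of `𝔽_p[x_i : i ∈ ℕ]` by the ideal generated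
by all `x_i^p − x_i`. Then `B` is not set-like: there is no set `S` such that `B` is
isomorphic as an `𝔽_p`-algebra to the algebra of all functions `S → 𝔽_p` with pointwise
operations. -/
theorem free_pBoolean_not_setlike (p : ℕ) [Fact p.Prime] (S : Type*) :
    IsEmpty ((MvPolynomial ℕ (ZMod p) ⧸
        Ideal.span {f : MvPolynomial ℕ (ZMod p) |
          ∃ i : ℕ, f = MvPolynomial.X i ^ p - MvPolynomial.X i})
      ≃ₐ[ZMod p] (S → ZMod p)) := by
  refine ⟨fun e => ?_⟩
  have eB : FreePBoolean ℕ p ≃ (S → ZMod p) := e.toEquiv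
  have : Countable (S → ZMod p) := eB.countable_iff.mp inferInstance
  have : Infinite (S → ZMod p) := eB.infinite_iff.mp inferInstance
  exact not_finite_iff_infinite.mpr ‹_› (Pi.finite_of_countable S (ZMod p))
end

section
/- Let F be a field and n ≥ 0. Let f : A → C and u : B → C be morphisms of ℕ-indexed cochain complexes of F-vector spaces such that each component f^s : A^s → C^s is surjective. Let E be the degreewise pullback of f and u (so E^s = B^s ×_{C^s} A^s) and let g : E → B be the projection. If the induced map H^s(f) on cohomology is an isomorphism for all s < n and injective for s = n, then H^s(g) is an isomorphism for all s < n and injective for s = n. (This is Lemma 4.17 of the paper — a homotopy pullback of an n-connected map is n-connected — in the case of the category cVec of cosimplicial F-vector spaces, translated through the Dold–Kan correspondence into cochain complexes; in this model structure the fibrations are the degreewise surjections and a map is cosimplicially n-connected if it induces isomorphisms on cohomotopy/cohomology in degrees below n and a monomorphism in degree n.) -/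
/-!
Since `g` is a base change of the epimorphism `f`, it is an epimorphism too, and the induced
map `ker g ⟶ ker f` is an isomorphism; so `ker f ⟶ A ⟶ C` and `ker g ⟶ E ⟶ B` are short
exact sequences with the same kernel. By the long exact cohomology sequence, the quotient map of a
short exact sequence of cochain complexes is `n`-connected exactly when the kernel has vanishing
cohomology in degrees `≤ n`. Hence `g` is `n`-connected if and only if `f` is.
-/

open CategoryTheory Limits

lemma HomologicalComplex.isPullback_of_isPullback_f {V : Type*} [Category V] [HasZeroMorphisms V]
    {ι : Type*} {c : ComplexShape ι} {P X Y Z : HomologicalComplex V c} {fst : P ⟶ X}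
    {snd : P ⟶ Y} {f : X ⟶ Z} {g : Y ⟶ Z}
    (h : ∀ i, IsPullback (fst.f i) (snd.f i) (f.f i) (g.f i)) : IsPullback fst snd f g := by
  have w : fst ≫ f = snd ≫ g := by ext i; exact (h i).w
  exact IsPullback.of_isLimit (c := PullbackCone.mk fst snd w) <| isLimitOfEval _ _ fun i =>
    (isLimitMapConePullbackConeEquiv (eval V c i) w).symm (h i).isLimit

lemma CategoryTheory.ShortComplex.kernelSequence_shortExact {V : Type*} [Category V] [Abelian V]
    {X Y : V} (f : X ⟶ Y) [Epi f] : (kernelSequence f).ShortExact where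
  exact := kernelSequence_exact f
  epi_g := ‹Epi f›

def HomologicalComplex.HomologyConnected {V : Type*} [Category V] [Abelian V] (n : ℕ)
    {K L : CochainComplex V ℕ} (φ : K ⟶ L) : Prop :=
  (∀ s < n, IsIso (homologyMap φ s)) ∧ Mono (homologyMap φ n)

namespace CategoryTheory.ShortComplex.ShortExact

open HomologicalComplex (HomologyConnected mono_homologyMap_of_mono_of_not_rel)

variable {V : Type*} [Category V] [Abelian V] {S : ShortComplex (CochainComplex V ℕ)}

lemma mono_homologyMap_f_succ (hS : S.ShortExact) {t : ℕ}
    [Epi (HomologicalComplex.homologyMap S.g t)] :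
    Mono (HomologicalComplex.homologyMap S.f (t + 1)) :=
  (hS.homology_exact₁ t (t + 1) rfl).mono_g
    ((hS.homology_exact₃ t (t + 1) rfl).epi_f_iff.1 inferInstance)

lemma homologyConnected_g_iff (hS : S.ShortExact) {n : ℕ} :
    HomologyConnected n S.g ↔ ∀ s ≤ n, IsZero (S.X₁.homology s) := by
  constructor
  · rintro ⟨hiso, hmono⟩ s hs
    have : Mono (HomologicalComplex.homologyMap S.g s) := by
      rcases hs.lt_or_eq with hs | rfl
      · have := hiso s hs; infer_instance
      · exact hmono
    have hzero : HomologicalComplex.homologyMap S.f s = 0 :=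
      (hS.homology_exact₂ s).mono_g_iff.1 this
    have : Mono (HomologicalComplex.homologyMap S.f s) := by
      have := hS.mono_f
      cases s with
      | zero => exact mono_homologyMap_of_mono_of_not_rel _ _ (by simp)
      | succ t =>
        have := hiso t (by omega)
        exact hS.mono_homologyMap_f_succ
    exact IsZero.of_mono_eq_zero _ hzero
  · intro hK
    have hmono : ∀ s ≤ n, Mono (HomologicalComplex.homologyMap S.g s) := fun s hs =>
      (hS.homology_exact₂ s).mono_g ((hK s hs).eq_of_src _ _)
    refine ⟨fun s hs => ?_, hmono n le_rfl⟩
    have := hmono s hs.le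
    have : Epi (HomologicalComplex.homologyMap S.g s) :=
      (hS.homology_exact₃ s (s + 1) rfl).epi_f ((hK (s + 1) hs).eq_of_tgt _ _)
    exact isIso_of_mono_of_epi _

end CategoryTheory.ShortComplex.ShortExact

/-- **homotopy pullbacks of n-connected maps in cosimplicial vector
spaces, via Dold–Kan.** Let `F` be a field and `n ≥ 0`. Let `f : A → C` and `u : B → C`
be morphisms of `ℕ`-indexed cochain complexes of `F`-vector spaces with each component
`fˢ : Aˢ → Cˢ` surjective. Let `E` be the degreewise pullback of `f` and `u`
(with projections `h : E → A` and `g : E → B`). If `Hˢ(f)` is an isomorphism for all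
`s < n` and injective for `s = n`, then `Hˢ(g)` is an isomorphism for all `s < n` and
injective for `s = n`. -/
theorem connected_pullback_of_cochain_complexes (F : Type*) [Field F] (n : ℕ)
    (A B C E : CochainComplex (ModuleCat F) ℕ)
    (f : A ⟶ C) (u : B ⟶ C) (h : E ⟶ A) (g : E ⟶ B)
    (hsurj : ∀ s : ℕ, Function.Surjective (f.f s))
    (hpb : ∀ s : ℕ, IsPullback (h.f s) (g.f s) (f.f s) (u.f s))
    (hiso : ∀ s < n, IsIso (HomologicalComplex.homologyMap f s))
    (hmono : Mono (HomologicalComplex.homologyMap f n)) :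
    (∀ s < n, IsIso (HomologicalComplex.homologyMap g s)) ∧
      Mono (HomologicalComplex.homologyMap g n) := by
  have : Epi f := HomologicalComplex.epi_of_epi_f _ fun s =>
    (ModuleCat.epi_iff_surjective _).2 (hsurj s)
  have sq := HomologicalComplex.isPullback_of_isPullback_f hpb
  have : Epi g := Abelian.epi_snd_of_isLimit f u sq.isLimit
  have : IsIso (kernel.map g f h u sq.w.symm) := isIso_kernel_map_of_isPullback sq.flip
  have hKf := (ShortComplex.kernelSequence_shortExact f).homologyConnected_g_iff.1 ⟨hiso, hmono⟩
  refine (ShortComplex.kernelSequence_shortExact g).homologyConnected_g_iff.2 fun s hs => ?_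
  exact (hKf s hs).of_iso (HomologicalComplex.homologyMapIso (asIso (kernel.map g f h u _)) s)
end
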